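/- For every positive integer n and every ε > 0 there exists δ > 0 (depending only on n and ε) with the following property: if H is an infinite-dimensional separable complex Hilbert space and T₁,…,T_n ∈ B(H) are self-adjoint with ‖T_j‖ ≤ 1 (1 ≤ j ≤ n) and ‖T_iT_j − T_jT_i‖ < δ for all 1 ≤ i,j ≤ n, then for every λ = (λ₁,…,λ_n) ∈ sSp^{ε/4}((T₁,…,T_n)) (taken with M = 1) there exists a unit vector v ∈ H such that max_{1≤i≤n} |exp_{T_i}(v) − λ_i| < ε and max_{1≤i≤n} sd_{T_i}(v) < ε. -/

import Mathlib

/-!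
Let `η = ε / 4` and let `x` be a grid point within `η` of `λ` with `‖Θ_{x,η}(T)‖ ≥ 1 - η`.
The bump `φᵢ = θ_{xᵢ,4η/3}(Tᵢ)` equals `1` on the support of `θ_{xᵢ,η}`, so it fixes the `i`-th
factor of `Θ_{x,η}(T)`; as it almost commutes with the other factors, it almost fixes
`Θ_{x,η}(T)`, hence almost fixes `v = Θu / ‖Θu‖` for a `u` on which `Θ` nearly attains its norm.
Since `‖(Tᵢ - xᵢ) φᵢ‖ ≤ 4η/3`, the vector `(Tᵢ - xᵢ) v` is small, and this bounds both
`|exp_{Tᵢ}(v) - xᵢ|` and `sd_{Tᵢ}(v)`.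

The almost commutation is uniform in the grid point: `θ_{xᵢ,η}(Tᵢ) = θ_{0,η}(Tᵢ - xᵢ)`, and
`θ_{0,η}` is uniformly approximated on `[-2, 2]` by one polynomial, whose commutators are
controlled by `‖[Tᵢ, Tⱼ]‖` with a constant depending only on the polynomial.
For `ε ≥ 4` any unit vector works.
-/

open scoped ComplexOrder

noncomputable def theta (lam eta : ℝ) : ℝ → ℝ :=
  fun t => max 0 (min 1 ((eta - |t - lam|) / (eta / 4)))

/-- `Θ_{ξ,η}(a₁,…,a_n)`: ordered product of `θ_{ξᵢ,η}(aᵢ)` (continuous functional calculus). -/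
noncomputable def ThetaProd {A : Type*} [CStarAlgebra A] {n : ℕ}
    (xi : Fin n → ℝ) (eta : ℝ) (a : Fin n → A) : A :=
  (List.ofFn (fun i => cfc (theta (xi i) eta) (a i))).prod

/-- The grid size `k`: the smallest positive integer with `(M+1)/k < η/(2√n)`. -/
noncomputable def gridSize (n : ℕ) (M eta : ℝ) : ℕ :=
  sInf {k : ℕ | 0 < k ∧ (M + 1) / (k : ℝ) < eta / (2 * Real.sqrt n)}

/-- The grid `D^η ⊆ ℝⁿ`. -/
def grid (n : ℕ) (M eta : ℝ) : Set (EuclideanSpace ℝ (Fin n)) :=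
  {x | ∃ m : Fin n → ℤ, (∀ i, x i = (m i : ℝ) / (gridSize n M eta)) ∧
        ∀ i, |(m i : ℝ)| ≤ M * (gridSize n M eta)}

/-- The `η`-synthetic spectrum of an `n`-tuple of self-adjoint elements. -/
noncomputable def sSp {A : Type*} [CStarAlgebra A] (n : ℕ) (M eta : ℝ)
    (a : Fin n → A) : Set (EuclideanSpace ℝ (Fin n)) :=
  ⋃ x ∈ {x ∈ grid n M eta | 1 - eta ≤ ‖ThetaProd x eta a‖}, Metric.closedBall x eta

noncomputable def expVal {H : Type*} [NormedAddCommGroup H] [InnerProductSpace ℂ H]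
    (T : H →L[ℂ] H) (v : H) : ℝ :=
  RCLike.re (inner ℂ (T v) v : ℂ)

noncomputable def sd {H : Type*} [NormedAddCommGroup H] [InnerProductSpace ℂ H]
    (T : H →L[ℂ] H) (v : H) : ℝ :=
  ‖T v - expVal T v • v‖

open Polynomial Set

section Commutator

variable {A : Type*} [NormedRing A]

theorem norm_commutator_le (x y : A) : ‖x * y - y * x‖ ≤ 2 * ‖x‖ * ‖y‖ := by
  calc ‖x * y - y * x‖ ≤ ‖x‖ * ‖y‖ + ‖y‖ * ‖x‖ :=
        (norm_sub_le _ _).trans (add_le_add (norm_mul_le _ _) (norm_mul_le _ _))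
    _ = 2 * ‖x‖ * ‖y‖ := by ring

theorem norm_commutator_le_of_norm_sub_le {x y x' y' : A} {ρ : ℝ} (hρ : ρ ≤ 1)
    (hx : ‖x‖ ≤ 1) (hy : ‖y‖ ≤ 1) (hxx' : ‖x - x'‖ ≤ ρ) (hyy' : ‖y - y'‖ ≤ ρ) :
    ‖x * y - y * x‖ ≤ ‖x' * y' - y' * x'‖ + 6 * ρ := by
  have hx' : ‖x'‖ ≤ 2 := by
    calc ‖x'‖ = ‖x - (x - x')‖ := by rw [sub_sub_cancel]
      _ ≤ ‖x‖ + ‖x - x'‖ := norm_sub_le _ _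
      _ ≤ 2 := by linarith
  have hsplit : x * y - y * x = (x' * y' - y' * x')
      + (((x - x') * y - y * (x - x')) + (x' * (y - y') - (y - y') * x')) := by
    noncomm_ring
  have h1 := norm_commutator_le (x - x') y
  have h2 := norm_commutator_le x' (y - y')
  have hρ0 : 0 ≤ ρ := (norm_nonneg _).trans hxx'
  calc ‖x * y - y * x‖ ≤ ‖x' * y' - y' * x'‖ + (2 * ‖x - x'‖ * ‖y‖ + 2 * ‖x'‖ * ‖y - y'‖) := by
        rw [hsplit]
        exact (norm_add_le _ _).trans
          (add_le_add_right ((norm_add_le _ _).trans (add_le_add h1 h2)) _)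
    _ ≤ ‖x' * y' - y' * x'‖ + (2 * ρ * 1 + 2 * 2 * ρ) := by gcongr
    _ = ‖x' * y' - y' * x'‖ + 6 * ρ := by ring

theorem norm_pow_commutator_le (a b : A) (k : ℕ) :
    ‖a ^ k * b - b * a ^ k‖ ≤ k * ‖a‖ ^ (k - 1) * ‖a * b - b * a‖ := by
  induction k with
  | zero => simp
  | succ k ih =>
    rcases Nat.eq_zero_or_pos k with rfl | hk
    · simp
    have hsplit : a ^ (k + 1) * b - b * a ^ (k + 1)
        = (a ^ k * b - b * a ^ k) * a + a ^ k * (a * b - b * a) := by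
      rw [pow_succ]; noncomm_ring
    have hpow : ‖a ^ k‖ ≤ ‖a‖ ^ k := norm_pow_le' a hk
    have hk' : ‖a‖ ^ (k - 1) * ‖a‖ = ‖a‖ ^ k := by rw [← pow_succ, Nat.sub_add_cancel hk]
    calc ‖a ^ (k + 1) * b - b * a ^ (k + 1)‖
        ≤ ‖a ^ k * b - b * a ^ k‖ * ‖a‖ + ‖a ^ k‖ * ‖a * b - b * a‖ := by
          rw [hsplit]
          exact (norm_add_le _ _).trans (add_le_add (norm_mul_le _ _) (norm_mul_le _ _))
      _ ≤ k * ‖a‖ ^ (k - 1) * ‖a * b - b * a‖ * ‖a‖ + ‖a‖ ^ k * ‖a * b - b * a‖ := by gcongr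
      _ = (k + 1 : ℕ) * ‖a‖ ^ (k + 1 - 1) * ‖a * b - b * a‖ := by
          rw [Nat.add_sub_cancel, ← hk']; push_cast; ring

end Commutator

def commutatorConst (p : ℝ[X]) (r : ℝ) : ℝ :=
  ∑ k ∈ Finset.range (p.natDegree + 1), |p.coeff k| * (k * r ^ (k - 1))

theorem commutatorConst_nonneg (p : ℝ[X]) {r : ℝ} (hr : 0 ≤ r) : 0 ≤ commutatorConst p r :=
  Finset.sum_nonneg fun _ _ => by positivity

section PolynomialCommutator

variable {A : Type*} [NormedRing A] [NormedAlgebra ℝ A]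

theorem norm_aeval_commutator_le (p : ℝ[X]) {a : A} (b : A) {r : ℝ} (ha : ‖a‖ ≤ r) :
    ‖aeval a p * b - b * aeval a p‖ ≤ commutatorConst p r * ‖a * b - b * a‖ := by
  have hsum : aeval a p * b - b * aeval a p
      = ∑ k ∈ Finset.range (p.natDegree + 1), p.coeff k • (a ^ k * b - b * a ^ k) := by
    simp only [aeval_eq_sum_range, Finset.sum_mul, Finset.mul_sum, ← Finset.sum_sub_distrib,
      smul_mul_assoc, mul_smul_comm, smul_sub]
  rw [hsum, commutatorConst, Finset.sum_mul]
  refine (norm_sum_le _ _).trans (Finset.sum_le_sum fun k _ => ?_)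
  rw [norm_smul, Real.norm_eq_abs, mul_assoc]
  gcongr
  exact (norm_pow_commutator_le a b k).trans (by gcongr)

theorem norm_aeval_commutator_aeval_le (p q : ℝ[X]) {a b : A} {r : ℝ} (ha : ‖a‖ ≤ r)
    (hb : ‖b‖ ≤ r) :
    ‖aeval a p * aeval b q - aeval b q * aeval a p‖
      ≤ commutatorConst p r * commutatorConst q r * ‖a * b - b * a‖ := by
  have hr : 0 ≤ r := (norm_nonneg a).trans ha
  calc ‖aeval a p * aeval b q - aeval b q * aeval a p‖
      ≤ commutatorConst p r * ‖a * aeval b q - aeval b q * a‖ :=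
        norm_aeval_commutator_le p _ ha
    _ ≤ commutatorConst p r * (commutatorConst q r * ‖b * a - a * b‖) := by
        rw [norm_sub_rev]
        gcongr
        · exact commutatorConst_nonneg p hr
        · exact norm_aeval_commutator_le q a hb
    _ = commutatorConst p r * commutatorConst q r * ‖a * b - b * a‖ := by
        rw [norm_sub_rev (b * a), mul_assoc]

end PolynomialCommutator

theorem continuous_theta (lam eta : ℝ) : Continuous (theta lam eta) := by
  unfold theta; fun_prop

theorem abs_theta_le_one (lam eta t : ℝ) : |theta lam eta t| ≤ 1 := by
  unfold theta
  rw [abs_of_nonneg (le_max_left _ _)]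
  exact max_le zero_le_one (min_le_left _ _)

theorem theta_eq_zero {lam eta t : ℝ} (heta : 0 < eta) (h : eta ≤ |t - lam|) :
    theta lam eta t = 0 := by
  have : (eta - |t - lam|) / (eta / 4) ≤ 0 :=
    div_nonpos_of_nonpos_of_nonneg (by linarith) (by linarith)
  exact max_eq_left ((min_le_right _ _).trans this)

theorem theta_eq_one {lam eta t : ℝ} (heta : 0 < eta) (h : |t - lam| ≤ 3 * eta / 4) :
    theta lam eta t = 1 := by
  have : 1 ≤ (eta - |t - lam|) / (eta / 4) := by rw [le_div_iff₀ (by linarith)]; linarith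
  simp only [theta, min_eq_left this, max_eq_right zero_le_one]

theorem theta_comp_sub (lam eta : ℝ) : theta lam eta = theta 0 eta ∘ (· - lam) := by
  ext t; simp [theta]

theorem theta_mul_theta {lam eta : ℝ} (heta : 0 < eta) (t : ℝ) :
    theta lam (4 * eta / 3) t * theta lam eta t = theta lam eta t := by
  rcases lt_or_ge |t - lam| eta with h | h
  · rw [theta_eq_one (by linarith) (by linarith), one_mul]
  · rw [theta_eq_zero heta h, mul_zero]

theorem abs_sub_mul_theta_le {lam eta : ℝ} (heta : 0 < eta) (t : ℝ) :
    |(t - lam) * theta lam eta t| ≤ eta := by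
  rcases le_total |t - lam| eta with h | h
  · rw [abs_mul]
    nlinarith [abs_theta_le_one lam eta t, abs_nonneg (theta lam eta t)]
  · rw [theta_eq_zero heta h, mul_zero, abs_zero]; exact heta.le

theorem sub_algebraMap_commutator {R A : Type*} [CommSemiring R] [Ring A] [Algebra R A]
    (a b : A) (x y : R) :
    (a - algebraMap R A x) * (b - algebraMap R A y)
      - (b - algebraMap R A y) * (a - algebraMap R A x) = a * b - b * a := by
  simp only [sub_mul, mul_sub, Algebra.commutes x b, Algebra.commutes y a, ← map_mul, mul_comm x y]
  abel

theorem mem_Icc_of_mem_spectrum {A : Type*} [NormedRing A] [NormedAlgebra ℝ A] [CompleteSpace A]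
    [NormOneClass A] {a : A} {r t : ℝ} (ha : ‖a‖ ≤ r) (ht : t ∈ spectrum ℝ a) : t ∈ Icc (-r) r :=
  abs_le.mp ((spectrum.norm_le_norm_of_mem ht).trans ha)

section CFC

variable {A : Type*} [CStarAlgebra A]

theorem norm_cfc_theta_le_one (lam eta : ℝ) (a : A) : ‖cfc (theta lam eta) a‖ ≤ 1 :=
  norm_cfc_le zero_le_one fun t _ => by rw [Real.norm_eq_abs]; exact abs_theta_le_one _ _ _

theorem cfc_theta_eq_cfc_theta_sub {a : A} (ha : IsSelfAdjoint a) (lam eta : ℝ) :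
    cfc (theta lam eta) a = cfc (theta 0 eta) (a - algebraMap ℝ A lam) := by
  have hsub : cfc (· - lam) a = a - algebraMap ℝ A lam := by
    rw [cfc_sub (fun t : ℝ => t) (fun _ => lam) a, cfc_id' ℝ a, cfc_const lam a]
  rw [theta_comp_sub, cfc_comp _ _ a ha (continuous_theta 0 eta).continuousOn, hsub]

theorem cfc_theta_mul_cfc_theta {eta : ℝ} (heta : 0 < eta) (lam : ℝ) (a : A) :
    cfc (theta lam (4 * eta / 3)) a * cfc (theta lam eta) a = cfc (theta lam eta) a := by
  rw [← cfc_mul _ _ a (continuous_theta _ _).continuousOn (continuous_theta _ _).continuousOn]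
  exact cfc_congr fun t _ => theta_mul_theta heta t

theorem norm_sub_algebraMap_mul_cfc_theta_le {eta : ℝ} (heta : 0 < eta) (lam : ℝ) {a : A}
    (ha : IsSelfAdjoint a) :
    ‖(a - algebraMap ℝ A lam) * cfc (theta lam eta) a‖ ≤ eta := by
  have hsub : a - algebraMap ℝ A lam = cfc (· - lam) a := by
    rw [cfc_sub (fun t : ℝ => t) (fun _ => lam) a, cfc_id' ℝ a, cfc_const lam a]
  rw [hsub, ← cfc_mul _ _ a (by fun_prop) (continuous_theta _ _).continuousOn]
  exact norm_cfc_le heta.le fun t _ => by rw [Real.norm_eq_abs]; exact abs_sub_mul_theta_le heta t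

theorem norm_cfc_sub_aeval_le [NormOneClass A] {f : ℝ → ℝ} {p : ℝ[X]} {r ρ : ℝ}
    (hfp : ∀ t ∈ Icc (-r) r, |p.eval t - f t| ≤ ρ) {a : A} (ha : IsSelfAdjoint a)
    (har : ‖a‖ ≤ r) (hf : ContinuousOn f (spectrum ℝ a)) :
    ‖cfc f a - aeval a p‖ ≤ ρ := by
  have hr : 0 ≤ r := (norm_nonneg a).trans har
  have hρ : 0 ≤ ρ := (abs_nonneg _).trans (hfp 0 ⟨by linarith, hr⟩)
  rw [← cfc_polynomial p a, ← cfc_sub f (fun t => p.eval t) a]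
  exact norm_cfc_le hρ fun t ht => by
    rw [Real.norm_eq_abs, abs_sub_comm]; exact hfp t (mem_Icc_of_mem_spectrum har ht)

theorem norm_cfc_theta_commutator_le [NormOneClass A] {eta eta' ρ : ℝ} {p q : ℝ[X]}
    (hρ : ρ ≤ 1) (hp : ∀ t ∈ Icc (-2 : ℝ) 2, |p.eval t - theta 0 eta t| ≤ ρ)
    (hq : ∀ t ∈ Icc (-2 : ℝ) 2, |q.eval t - theta 0 eta' t| ≤ ρ)
    {a b : A} (ha : IsSelfAdjoint a) (hb : IsSelfAdjoint b) (ha1 : ‖a‖ ≤ 1) (hb1 : ‖b‖ ≤ 1)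
    {x y : ℝ} (hx : |x| ≤ 1) (hy : |y| ≤ 1) :
    ‖cfc (theta x eta) a * cfc (theta y eta') b - cfc (theta y eta') b * cfc (theta x eta) a‖
      ≤ commutatorConst p 2 * commutatorConst q 2 * ‖a * b - b * a‖ + 6 * ρ := by
  have hshift : ∀ {c : A} {z : ℝ}, ‖c‖ ≤ 1 → |z| ≤ 1 → ‖c - algebraMap ℝ A z‖ ≤ 2 := by
    intro c z hc hz
    calc ‖c - algebraMap ℝ A z‖ ≤ ‖c‖ + ‖algebraMap ℝ A z‖ := norm_sub_le _ _
      _ ≤ 2 := by rw [norm_algebraMap', Real.norm_eq_abs]; linarith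
  have ha' := ha.sub (.algebraMap A (.all x))
  have hb' := hb.sub (.algebraMap A (.all y))
  rw [cfc_theta_eq_cfc_theta_sub ha, cfc_theta_eq_cfc_theta_sub hb,
    ← sub_algebraMap_commutator a b x y]
  refine (norm_commutator_le_of_norm_sub_le hρ (norm_cfc_theta_le_one _ _ _)
    (norm_cfc_theta_le_one _ _ _)
    (norm_cfc_sub_aeval_le hp ha' (hshift ha1 hx) (continuous_theta _ _).continuousOn)
    (norm_cfc_sub_aeval_le hq hb' (hshift hb1 hy) (continuous_theta _ _).continuousOn)).trans ?_
  gcongr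
  exact norm_aeval_commutator_aeval_le p q (hshift ha1 hx) (hshift hb1 hy)

end CFC

section Absorption

variable {A : Type*} [NormedRing A] [NormOneClass A]

theorem List.norm_prod_le_one : ∀ {l : List A}, (∀ x ∈ l, ‖x‖ ≤ 1) → ‖l.prod‖ ≤ 1
  | [], _ => by simp
  | x :: l, hl => by
    rw [List.prod_cons]
    exact (norm_mul_le _ _).trans (mul_le_one₀ (hl x (by simp)) (norm_nonneg _)
      (List.norm_prod_le_one fun y hy => hl y (by simp [hy])))

theorem norm_mul_list_prod_sub_le {φ : A} {γ : ℝ} {l : List A} (hl : ∀ x ∈ l, ‖x‖ ≤ 1)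
    (hγ : ∀ x ∈ l, ‖φ * x - x * φ‖ ≤ γ) (hfix : ∃ x ∈ l, φ * x = x) :
    ‖φ * l.prod - l.prod‖ ≤ l.length * γ := by
  induction l with
  | nil => simp at hfix
  | cons x t ih =>
    have hγ0 : 0 ≤ γ := (norm_nonneg _).trans (hγ x (by simp))
    rw [List.prod_cons]
    by_cases hx : φ * x = x
    · rw [← mul_assoc, hx, sub_self, norm_zero]; positivity
    have hfix' : ∃ y ∈ t, φ * y = y := by
      obtain ⟨y, hy, hφy⟩ := hfix
      rcases List.mem_cons.mp hy with rfl | hy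
      · exact absurd hφy hx
      · exact ⟨y, hy, hφy⟩
    have ih' := ih (fun y hy => hl y (by simp [hy])) (fun y hy => hγ y (by simp [hy])) hfix'
    have hsplit : φ * (x * t.prod) - x * t.prod
        = (φ * x - x * φ) * t.prod + x * (φ * t.prod - t.prod) := by noncomm_ring
    calc ‖φ * (x * t.prod) - x * t.prod‖
        ≤ ‖φ * x - x * φ‖ * ‖t.prod‖ + ‖x‖ * ‖φ * t.prod - t.prod‖ := by
          rw [hsplit]
          exact (norm_add_le _ _).trans (add_le_add (norm_mul_le _ _) (norm_mul_le _ _))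
      _ ≤ γ * 1 + 1 * (t.length * γ) := by
          gcongr
          · exact hγ x (by simp)
          · exact List.norm_prod_le_one fun y hy => hl y (by simp [hy])
          · exact hl x (by simp)
      _ = (x :: t).length * γ := by simp; ring

end Absorption

theorem exists_norm_eq_one_forall_norm_apply_le {𝕜 E ι : Type*} [RCLike 𝕜]
    [NormedAddCommGroup E] [NormedSpace 𝕜 E] {P : E →L[𝕜] E} {β κ : ℝ} (hβ : 0 < β)
    (hP : β < ‖P‖) {R φ : ι → E →L[𝕜] E} (hφ : ∀ i, ‖φ i * P - P‖ ≤ κ) :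
    ∃ v : E, ‖v‖ = 1 ∧ ∀ i, ‖R i v‖ ≤ ‖R i * φ i‖ + ‖R i‖ * κ / β := by
  obtain ⟨u, hu1, hu⟩ := P.exists_lt_apply_of_lt_opNorm hP
  have hw : 0 < ‖P u‖ := hβ.trans hu
  refine ⟨(‖P u‖⁻¹ : 𝕜) • P u, norm_smul_inv_norm (norm_pos_iff.mp hw), fun i => ?_⟩
  have hκ : 0 ≤ κ := (norm_nonneg _).trans (hφ i)
  have hsplit : R i (P u) = (R i * φ i) (P u) - R i ((φ i * P - P) u) := by simp
  have hRw : ‖R i (P u)‖ ≤ ‖R i * φ i‖ * ‖P u‖ + ‖R i‖ * κ := by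
    rw [hsplit]
    refine (norm_sub_le _ _).trans (add_le_add ((R i * φ i).le_opNorm _) ?_)
    calc ‖R i ((φ i * P - P) u)‖ ≤ ‖R i‖ * (‖φ i * P - P‖ * ‖u‖) :=
          (R i).le_opNorm_of_le ((φ i * P - P).le_opNorm u)
      _ ≤ ‖R i‖ * κ := by gcongr; nlinarith [norm_nonneg u, norm_nonneg (φ i * P - P), hφ i]
  calc ‖R i ((‖P u‖⁻¹ : 𝕜) • P u)‖ = ‖R i (P u)‖ / ‖P u‖ := by
        rw [map_smul, norm_smul, norm_inv, RCLike.norm_ofReal, abs_norm, inv_mul_eq_div]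
    _ ≤ (‖R i * φ i‖ * ‖P u‖ + ‖R i‖ * κ) / ‖P u‖ := by gcongr
    _ = ‖R i * φ i‖ + ‖R i‖ * κ / ‖P u‖ := by field_simp
    _ ≤ ‖R i * φ i‖ + ‖R i‖ * κ / β := by gcongr

section Moments

variable {H : Type*} [NormedAddCommGroup H] [InnerProductSpace ℂ H]

theorem abs_expVal_sub_le (T : H →L[ℂ] H) {v : H} (hv : ‖v‖ = 1) (c : ℝ) :
    |expVal T v - c| ≤ ‖T v - c • v‖ := by
  have hre : expVal T v - c = RCLike.re (inner ℂ (T v - c • v) v) := by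
    rw [inner_sub_left, RCLike.real_smul_eq_coe_smul (K := ℂ), inner_smul_real_left,
      inner_self_eq_norm_sq_to_K, hv, map_sub, expVal]
    simp
  rw [hre]
  calc |RCLike.re (inner ℂ (T v - c • v) v)| ≤ ‖inner ℂ (T v - c • v) v‖ := RCLike.abs_re_le_norm _
    _ ≤ ‖T v - c • v‖ * ‖v‖ := norm_inner_le_norm _ _
    _ = ‖T v - c • v‖ := by rw [hv, mul_one]

theorem sd_le_two_mul (T : H →L[ℂ] H) {v : H} (hv : ‖v‖ = 1) (c : ℝ) :
    sd T v ≤ 2 * ‖T v - c • v‖ := by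
  have hsplit : T v - expVal T v • v = (T v - c • v) + (c - expVal T v) • v := by
    rw [sub_smul]; abel
  calc sd T v ≤ ‖T v - c • v‖ + ‖(c - expVal T v) • v‖ := by
        rw [sd, hsplit]; exact norm_add_le _ _
    _ = ‖T v - c • v‖ + |expVal T v - c| := by
        rw [norm_smul, hv, mul_one, Real.norm_eq_abs, abs_sub_comm]
    _ ≤ 2 * ‖T v - c • v‖ := by linarith [abs_expVal_sub_le T hv c]

end Moments

theorem exists_of_mem_sSp {A : Type*} [CStarAlgebra A] {n : ℕ} {M eta : ℝ} (hM : 0 ≤ M)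
    {a : Fin n → A} {lam : EuclideanSpace ℝ (Fin n)} (h : lam ∈ sSp n M eta a) :
    ∃ x : EuclideanSpace ℝ (Fin n), (∀ i, |x i| ≤ M) ∧ (∀ i, |lam i - x i| ≤ eta) ∧
      1 - eta ≤ ‖ThetaProd x eta a‖ := by
  obtain ⟨x, ⟨⟨m, hxm, hmM⟩, hx⟩, hlam⟩ := Set.mem_iUnion₂.mp h
  refine ⟨x, fun i => ?_, fun i => ?_, hx⟩
  · rw [hxm i, abs_div, Nat.abs_cast]
    rcases (Nat.cast_nonneg (α := ℝ) (gridSize n M eta)).eq_or_lt with hk | hk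
    · rw [← hk, div_zero]; exact hM
    · exact (div_le_iff₀ hk).mpr (hmM i)
  · exact (PiLp.dist_apply_le lam x i).trans (Metric.mem_closedBall.mp hlam)

theorem exists_norm_eq_one_forall_norm_sub_smul_le {H : Type*} [NormedAddCommGroup H]
    [InnerProductSpace ℂ H] [CompleteSpace H] [Nontrivial H] {n : ℕ} {T : Fin n → H →L[ℂ] H}
    (hsa : ∀ i, IsSelfAdjoint (T i)) (hT : ∀ i, ‖T i‖ ≤ 1) {x : Fin n → ℝ} (hx : ∀ i, |x i| ≤ 1)
    {η β γ : ℝ} (hη : 0 < η) (hβ : 0 < β) (hP : β < ‖ThetaProd x η T‖)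
    (hγ : ∀ i j, ‖cfc (theta (x i) (4 * η / 3)) (T i) * cfc (theta (x j) η) (T j)
      - cfc (theta (x j) η) (T j) * cfc (theta (x i) (4 * η / 3)) (T i)‖ ≤ γ) :
    ∃ v : H, ‖v‖ = 1 ∧ ∀ i, ‖T i v - x i • v‖ ≤ 4 * η / 3 + 2 * (n * γ) / β := by
  set R : Fin n → H →L[ℂ] H := fun i => T i - algebraMap ℝ _ (x i)
  set φ : Fin n → H →L[ℂ] H := fun i => cfc (theta (x i) (4 * η / 3)) (T i)
  have hfix : ∀ i, ‖φ i * ThetaProd x η T - ThetaProd x η T‖ ≤ n * γ := fun i => by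
    simpa [ThetaProd] using norm_mul_list_prod_sub_le (by simp [norm_cfc_theta_le_one])
      (by simpa using hγ i)
      ⟨_, List.mem_ofFn.mpr ⟨i, rfl⟩, cfc_theta_mul_cfc_theta hη (x i) (T i)⟩
  obtain ⟨v, hv, hRv⟩ := exists_norm_eq_one_forall_norm_apply_le (R := R) hβ hP hfix
  refine ⟨v, hv, fun i => ?_⟩
  have hR : ‖R i‖ ≤ 2 := by
    calc ‖R i‖ ≤ ‖T i‖ + ‖algebraMap ℝ (H →L[ℂ] H) (x i)‖ := norm_sub_le _ _
      _ ≤ 2 := by rw [norm_algebraMap', Real.norm_eq_abs]; linarith [hT i, hx i]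
  have hRφ : ‖R i * φ i‖ ≤ 4 * η / 3 :=
    norm_sub_algebraMap_mul_cfc_theta_le (by positivity) (x i) (hsa i)
  have hγ0 : 0 ≤ γ := (norm_nonneg _).trans (hγ i i)
  calc ‖T i v - x i • v‖ = ‖R i v‖ := by simp [R, Algebra.algebraMap_eq_smul_one]
    _ ≤ ‖R i * φ i‖ + ‖R i‖ * (n * γ) / β := hRv i
    _ ≤ 4 * η / 3 + 2 * (n * γ) / β := by gcongr

theorem expVal_sd_le_of_mem_sSp {H : Type*} [NormedAddCommGroup H] [InnerProductSpace ℂ H]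
    [CompleteSpace H] [Nontrivial H] {n : ℕ} {T : Fin n → H →L[ℂ] H}
    (hsa : ∀ i, IsSelfAdjoint (T i)) (hT : ∀ i, ‖T i‖ ≤ 1) {η ρ δ : ℝ} {p q : ℝ[X]}
    (hη : 0 < η) (hη1 : η < 1) (hρ : ρ ≤ 1)
    (hp : ∀ t ∈ Icc (-2 : ℝ) 2, |p.eval t - theta 0 (4 * η / 3) t| ≤ ρ)
    (hq : ∀ t ∈ Icc (-2 : ℝ) 2, |q.eval t - theta 0 η t| ≤ ρ)
    (hcomm : ∀ i j, ‖T i * T j - T j * T i‖ ≤ δ) {lam : EuclideanSpace ℝ (Fin n)}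
    (hlam : lam ∈ sSp n 1 η T) :
    ∃ v : H, ‖v‖ = 1 ∧ ∀ i,
      let s := 4 * η / 3
        + 4 * (n * (commutatorConst p 2 * commutatorConst q 2 * δ + 6 * ρ)) / (1 - η)
      |expVal (T i) v - lam i| ≤ η + s ∧ sd (T i) v ≤ 2 * s := by
  obtain ⟨x, hx, hlamx, hP⟩ := exists_of_mem_sSp zero_le_one hlam
  have hC : 0 ≤ commutatorConst p 2 * commutatorConst q 2 :=
    mul_nonneg (commutatorConst_nonneg p zero_le_two) (commutatorConst_nonneg q zero_le_two)
  have hcfc i j := (norm_cfc_theta_commutator_le hρ hp hq (hsa i) (hsa j) (hT i) (hT j) (hx i)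
    (hx j)).trans (add_le_add_left (mul_le_mul_of_nonneg_left (hcomm i j) hC) (6 * ρ))
  obtain ⟨v, hv, hTv⟩ := exists_norm_eq_one_forall_norm_sub_smul_le hsa hT hx hη
    (by linarith : 0 < (1 - η) / 2) (by linarith) hcfc
  refine ⟨v, hv, fun i => ?_⟩
  intro s
  have hs : ‖T i v - x i • v‖ ≤ s := (hTv i).trans_eq (by rw [div_div_eq_mul_div]; ring)
  have hexp := abs_le.mp ((abs_expVal_sub_le (T i) hv (x i)).trans hs)
  have hlami := abs_le.mp (hlamx i)
  exact ⟨abs_le.mpr ⟨by linarith, by linarith⟩, (sd_le_two_mul (T i) hv (x i)).trans (by linarith)⟩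

theorem expVal_sd_lt_of_mem_sSp_of_four_le {H : Type*} [NormedAddCommGroup H]
    [InnerProductSpace ℂ H] [CompleteSpace H] [Nontrivial H] {n : ℕ} {T : Fin n → H →L[ℂ] H}
    (hT : ∀ i, ‖T i‖ ≤ 1) {ε : ℝ} (hε : 4 ≤ ε) {lam : EuclideanSpace ℝ (Fin n)}
    (hlam : lam ∈ sSp n 1 (ε / 4) T) :
    ∃ v : H, ‖v‖ = 1 ∧ (∀ i, |expVal (T i) v - lam i| < ε) ∧ ∀ i, sd (T i) v < ε := by
  obtain ⟨v, hv⟩ := exists_norm_eq H zero_le_one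
  obtain ⟨x, hx, hlamx, -⟩ := exists_of_mem_sSp zero_le_one hlam
  have hTv i : ‖T i v - (0 : ℝ) • v‖ ≤ 1 := by
    simpa [hv] using (T i).le_opNorm_of_le hv.le |>.trans (by simpa using hT i)
  refine ⟨v, hv, fun i => ?_, fun i => by linarith [sd_le_two_mul (T i) hv 0, hTv i]⟩
  have hexp := abs_le.mp ((abs_expVal_sub_le (T i) hv 0).trans (hTv i))
  have hxi := abs_le.mp (hx i)
  have hlami := abs_le.mp (hlamx i)
  exact abs_lt.mpr ⟨by linarith, by linarith⟩

theorem stmt0_general (n : ℕ) (ε : ℝ) (hε : 0 < ε) :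
    ∃ δ > 0, ∀ (H : Type) (_ : NormedAddCommGroup H) (_ : InnerProductSpace ℂ H)
      (_ : CompleteSpace H) (_ : TopologicalSpace.SeparableSpace H),
      ¬ FiniteDimensional ℂ H →
      ∀ T : Fin n → H →L[ℂ] H, (∀ i, IsSelfAdjoint (T i)) → (∀ i, ‖T i‖ ≤ 1) →
      (∀ i j, ‖T i * T j - T j * T i‖ < δ) →
      ∀ lam ∈ sSp n 1 (ε / 4) T,
        ∃ v : H, ‖v‖ = 1 ∧ (∀ i, |expVal (T i) v - lam i| < ε) ∧ ∀ i, sd (T i) v < ε := by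
  rcases le_or_gt 4 ε with hε4 | hε4
  · refine ⟨1, one_pos, fun H _ _ _ _ hH T _ hT _ lam hlam => ?_⟩
    have : Nontrivial H := not_subsingleton_iff_nontrivial.mp fun _ => hH inferInstance
    exact expVal_sd_lt_of_mem_sSp_of_four_le hT hε4 hlam
  set γ := ε * (1 - ε / 4) / (48 * (n + 1))
  set ρ := min 1 (γ / 12)
  have hη1 : 0 < 1 - ε / 4 := by linarith
  have hγ : 0 < γ := by positivity
  have hρ : 0 < ρ := lt_min one_pos (by positivity)
  obtain ⟨p, hp⟩ := exists_polynomial_near_of_continuousOn (-2) 2 (theta 0 (4 * (ε / 4) / 3))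
    (continuous_theta _ _).continuousOn ρ hρ
  obtain ⟨q, hq⟩ := exists_polynomial_near_of_continuousOn (-2) 2 (theta 0 (ε / 4))
    (continuous_theta _ _).continuousOn ρ hρ
  set C := commutatorConst p 2 * commutatorConst q 2
  have hC : 0 ≤ C :=
    mul_nonneg (commutatorConst_nonneg p zero_le_two) (commutatorConst_nonneg q zero_le_two)
  refine ⟨γ / (2 * (C + 1)), by positivity, fun H _ _ _ _ hH T hsa hT hcomm lam hlam => ?_⟩
  have : Nontrivial H := not_subsingleton_iff_nontrivial.mp fun _ => hH inferInstance
  obtain ⟨v, hv, hbound⟩ := expVal_sd_le_of_mem_sSp hsa hT (by positivity) (by linarith)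
    (min_le_left _ _) (fun t ht => (hp t ht).le) (fun t ht => (hq t ht).le)
    (fun i j => (hcomm i j).le) hlam
  have herr : C * (γ / (2 * (C + 1))) + 6 * ρ ≤ γ := by
    have : C * (γ / (2 * (C + 1))) ≤ γ / 2 := by
      rw [mul_div_assoc', div_le_div_iff₀ (by positivity) two_pos]; nlinarith
    linarith [min_le_right 1 (γ / 12)]
  have hs : 4 * (ε / 4) / 3 + 4 * (n * (C * (γ / (2 * (C + 1))) + 6 * ρ)) / (1 - ε / 4)
      ≤ 5 * ε / 12 := by
    calc 4 * (ε / 4) / 3 + 4 * (n * (C * (γ / (2 * (C + 1))) + 6 * ρ)) / (1 - ε / 4)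
        ≤ ε / 3 + 4 * (n * γ) / (1 - ε / 4) := by gcongr; linarith
      _ = ε / 3 + ε / 12 * (n / (n + 1)) := by simp only [γ]; field_simp; ring
      _ ≤ 5 * ε / 12 := by
          have : (n : ℝ) / (n + 1) ≤ 1 := by rw [div_le_one (by positivity)]; linarith
          nlinarith
  exact ⟨v, hv, fun i => by linarith [(hbound i).1], fun i => by linarith [(hbound i).2]⟩

theorem stmt0 (n : ℕ) (hn : 0 < n) (ε : ℝ) (hε : 0 < ε) :
    ∃ δ > 0, ∀ (H : Type) (_ : NormedAddCommGroup H) (_ : InnerProductSpace ℂ H)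
      (_ : CompleteSpace H) (_ : TopologicalSpace.SeparableSpace H),
      ¬ FiniteDimensional ℂ H →
      ∀ T : Fin n → H →L[ℂ] H, (∀ i, IsSelfAdjoint (T i)) → (∀ i, ‖T i‖ ≤ 1) →
      (∀ i j, ‖T i * T j - T j * T i‖ < δ) →
      ∀ lam ∈ sSp n 1 (ε / 4) T,
        ∃ v : H, ‖v‖ = 1 ∧ (∀ i, |expVal (T i) v - lam i| < ε) ∧ ∀ i, sd (T i) v < ε :=
  stmt0_general n ε hε
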